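/- For real affine automorphisms L, R of R^2 and a quadratic polynomial map f : R^2 -> R^2, one has det Φ_1(L ∘ f ∘ R) = J(L)^2 · J(R)^4 · det Φ_1(f), where Φ_1(f) is the 2×2 symmetric matrix of the degree-2 homogeneous part of 2·J(f) and J denotes the (constant) Jacobian determinant of an affine map. In particular, the sign of det Φ_1(f) is invariant under linear equivalence over R. -/

import Mathlib

/-- The Jacobian determinant of a map `ℝ² → ℝ²`. -/
noncomputable def jacDetR (f : ℝ × ℝ → ℝ × ℝ) (p : ℝ × ℝ) : ℝ :=
  fderiv ℝ (fun q => (f q).1) p (1, 0) * fderiv ℝ (fun q => (f q).2) p (0, 1)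
  - fderiv ℝ (fun q => (f q).1) p (0, 1) * fderiv ℝ (fun q => (f q).2) p (1, 0)

/-- The coefficient `A` of `x²` in the (quadratic polynomial) Jacobian determinant. -/
noncomputable def quadA (f : ℝ × ℝ → ℝ × ℝ) : ℝ :=
  (jacDetR f (1, 0) + jacDetR f (-1, 0) - 2 * jacDetR f (0, 0)) / 2

/-- The coefficient `C` of `y²` in the Jacobian determinant. -/
noncomputable def quadC (f : ℝ × ℝ → ℝ × ℝ) : ℝ :=
  (jacDetR f (0, 1) + jacDetR f (0, -1) - 2 * jacDetR f (0, 0)) / 2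

/-- The coefficient `B` of `xy` in the Jacobian determinant. -/
noncomputable def quadB (f : ℝ × ℝ → ℝ × ℝ) : ℝ :=
  (jacDetR f (1, 1) + jacDetR f (-1, -1) - 2 * jacDetR f (0, 0)) / 2 - quadA f - quadC f

/-- `det Φ₁(f) = 4AC - B²`, the determinant of the matrix `[[2A, B], [B, 2C]]` of the
degree-2 homogeneous part of `2·J(f)`. -/
noncomputable def phi1det (f : ℝ × ℝ → ℝ × ℝ) : ℝ :=
  4 * quadA f * quadC f - quadB f ^ 2

/-- A real affine automorphism of `ℝ²`. -/
structure AffR where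
  m11 : ℝ
  m12 : ℝ
  m21 : ℝ
  m22 : ℝ
  t1 : ℝ
  t2 : ℝ
  inv : m11 * m22 - m12 * m21 ≠ 0

/-- The underlying map of a real affine automorphism. -/
def AffR.toFun (A : AffR) (p : ℝ × ℝ) : ℝ × ℝ :=
  (A.m11 * p.1 + A.m12 * p.2 + A.t1, A.m21 * p.1 + A.m22 * p.2 + A.t2)

/-!
Writing `f = (P, Q)`, the quadratic part of `J(f)` is `2(a₁b₂ - a₂b₁) x² + 4(a₁c₂ - a₂c₁) x y
+ 2(b₁c₂ - b₂c₁) y²`, so `det Φ₁(f)` is `-16` times the resultant of the quadratic forms of `P` and `Q`.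
Translations only change lower-order terms; the resultant of two binary quadratics gains the factor
`det(L)²` when the pair is replaced by linear combinations, and `det(R)⁴` under a linear substitution,
being bihomogeneous of degree `(2, 2)` in the coefficients.
-/

def AffR.det (A : AffR) : ℝ :=
  A.m11 * A.m22 - A.m12 * A.m21

structure QuadPoly where
  a : ℝ
  b : ℝ
  c : ℝ
  d : ℝ
  e : ℝ
  f : ℝ

namespace QuadPoly

def eval (P : QuadPoly) (q : ℝ × ℝ) : ℝ :=
  P.a * q.1 ^ 2 + P.b * q.1 * q.2 + P.c * q.2 ^ 2 + P.d * q.1 + P.e * q.2 + P.f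

lemma fderiv_eval (P : QuadPoly) (p v : ℝ × ℝ) :
    fderiv ℝ P.eval p v
      = (2 * P.a * p.1 + P.b * p.2 + P.d) * v.1 + (P.b * p.1 + 2 * P.c * p.2 + P.e) * v.2 := by
  have hx : HasFDerivAt (fun q : ℝ × ℝ => q.1) (ContinuousLinearMap.fst ℝ ℝ ℝ) p := hasFDerivAt_fst
  have hy : HasFDerivAt (fun q : ℝ × ℝ => q.2) (ContinuousLinearMap.snd ℝ ℝ ℝ) p := hasFDerivAt_snd
  have h := (((((((hx.pow 2).const_mul P.a).add ((hx.const_mul P.b).mul hy)).add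
    ((hy.pow 2).const_mul P.c)).add (hx.const_mul P.d)).add (hy.const_mul P.e)).add_const P.f)
  rw [HasFDerivAt.fderiv (f := P.eval) h]
  simp only [Nat.add_one_sub_one, pow_one, nsmul_eq_mul, Nat.cast_ofNat, add_apply,
    smul_apply, ContinuousLinearMap.coe_fst', ContinuousLinearMap.coe_snd',
    smul_eq_mul]
  ring

def affComb (α β t : ℝ) (P Q : QuadPoly) : QuadPoly :=
  ⟨α * P.a + β * Q.a, α * P.b + β * Q.b, α * P.c + β * Q.c, α * P.d + β * Q.d, α * P.e + β * Q.e,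
    α * P.f + β * Q.f + t⟩

lemma eval_affComb (α β t : ℝ) (P Q : QuadPoly) (q : ℝ × ℝ) :
    (affComb α β t P Q).eval q = α * P.eval q + β * Q.eval q + t := by
  simp only [eval, affComb]
  ring

def compAff (P : QuadPoly) (R : AffR) : QuadPoly :=
  ⟨P.a * R.m11 ^ 2 + P.b * R.m11 * R.m21 + P.c * R.m21 ^ 2,
    2 * P.a * R.m11 * R.m12 + P.b * (R.m11 * R.m22 + R.m12 * R.m21) + 2 * P.c * R.m21 * R.m22,
    P.a * R.m12 ^ 2 + P.b * R.m12 * R.m22 + P.c * R.m22 ^ 2,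
    2 * P.a * R.m11 * R.t1 + P.b * (R.m11 * R.t2 + R.m21 * R.t1) + 2 * P.c * R.m21 * R.t2
      + P.d * R.m11 + P.e * R.m21,
    2 * P.a * R.m12 * R.t1 + P.b * (R.m12 * R.t2 + R.m22 * R.t1) + 2 * P.c * R.m22 * R.t2
      + P.d * R.m12 + P.e * R.m22,
    P.eval (R.t1, R.t2)⟩

lemma eval_compAff (P : QuadPoly) (R : AffR) (q : ℝ × ℝ) :
    (P.compAff R).eval q = P.eval (R.toFun q) := by
  simp only [eval, compAff, AffR.toFun]
  ring

/-- Up to sign, the resultant of the binary quadratic forms `a x² + b x y + c y²` of `P` and `Q`. -/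
def leadingResultant (P Q : QuadPoly) : ℝ :=
  (P.a * Q.c - Q.a * P.c) ^ 2 - (P.a * Q.b - Q.a * P.b) * (P.b * Q.c - Q.b * P.c)

lemma leadingResultant_affComb (α β s γ δ t : ℝ) (P Q : QuadPoly) :
    leadingResultant (affComb α β s P Q) (affComb γ δ t P Q)
      = (α * δ - β * γ) ^ 2 * leadingResultant P Q := by
  simp only [leadingResultant, affComb]
  ring

lemma leadingResultant_compAff (P Q : QuadPoly) (R : AffR) :
    leadingResultant (P.compAff R) (Q.compAff R)
      = R.det ^ 4 * leadingResultant P Q := by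
  simp only [leadingResultant, compAff, AffR.det]
  ring

end QuadPoly

open QuadPoly

def quadMap (P Q : QuadPoly) (q : ℝ × ℝ) : ℝ × ℝ :=
  (P.eval q, Q.eval q)

lemma jacDetR_quadMap (P Q : QuadPoly) (p : ℝ × ℝ) :
    jacDetR (quadMap P Q) p
      = (2 * P.a * p.1 + P.b * p.2 + P.d) * (Q.b * p.1 + 2 * Q.c * p.2 + Q.e)
        - (P.b * p.1 + 2 * P.c * p.2 + P.e) * (2 * Q.a * p.1 + Q.b * p.2 + Q.d) := by
  simp only [jacDetR, quadMap, fderiv_eval]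
  ring

lemma phi1det_quadMap (P Q : QuadPoly) :
    phi1det (quadMap P Q) = -16 * leadingResultant P Q := by
  simp only [phi1det, quadA, quadB, quadC, jacDetR_quadMap, leadingResultant]
  ring

lemma AffR.toFun_comp_quadMap (L : AffR) (P Q : QuadPoly) :
    L.toFun ∘ quadMap P Q
      = quadMap (affComb L.m11 L.m12 L.t1 P Q) (affComb L.m21 L.m22 L.t2 P Q) := by
  ext q <;> simp [quadMap, AffR.toFun, eval_affComb]

lemma quadMap_comp_toFun (P Q : QuadPoly) (R : AffR) :
    quadMap P Q ∘ R.toFun = quadMap (P.compAff R) (Q.compAff R) := by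
  ext q <;> simp [quadMap, eval_compAff]

lemma phi1det_toFun_comp_quadMap_comp (L R : AffR) (P Q : QuadPoly) :
    phi1det (L.toFun ∘ quadMap P Q ∘ R.toFun)
      = L.det ^ 2 * R.det ^ 4 * phi1det (quadMap P Q) := by
  rw [quadMap_comp_toFun, AffR.toFun_comp_quadMap, phi1det_quadMap, phi1det_quadMap,
    leadingResultant_affComb, leadingResultant_compAff]
  unfold AffR.det
  ring

/-- For affine automorphisms `L, R` of `ℝ²` and a quadratic map `f`,
`det Φ₁(L ∘ f ∘ R) = J(L)² · J(R)⁴ · det Φ₁(f)`; in particular the sign of `det Φ₁` is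
invariant under linear equivalence over `ℝ`. -/
theorem stmt_17 (L R : AffR) (a1 b1 c1 d1 e1 f1 a2 b2 c2 d2 e2 f2 : ℝ)
    (F : ℝ × ℝ → ℝ × ℝ)
    (hF : F = fun q : ℝ × ℝ =>
        (a1 * q.1 ^ 2 + b1 * q.1 * q.2 + c1 * q.2 ^ 2 + d1 * q.1 + e1 * q.2 + f1,
         a2 * q.1 ^ 2 + b2 * q.1 * q.2 + c2 * q.2 ^ 2 + d2 * q.1 + e2 * q.2 + f2)) :
    phi1det (L.toFun ∘ F ∘ R.toFun)
        = (L.m11 * L.m22 - L.m12 * L.m21) ^ 2 * (R.m11 * R.m22 - R.m12 * R.m21) ^ 4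
          * phi1det F ∧
      (0 < phi1det (L.toFun ∘ F ∘ R.toFun) ↔ 0 < phi1det F) := by
  obtain rfl : F = quadMap ⟨a1, b1, c1, d1, e1, f1⟩ ⟨a2, b2, c2, d2, e2, f2⟩ := hF
  have hL : L.det ≠ 0 := L.inv
  have hR : R.det ≠ 0 := R.inv
  have hscale : 0 < L.det ^ 2 * R.det ^ 4 := by positivity
  rw [phi1det_toFun_comp_quadMap_comp]
  exact ⟨rfl, mul_pos_iff_of_pos_left hscale⟩
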